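/- arXiv:1311.4185 — 3 statements merged into one kernel-verified Lean document; each statement's English description precedes it below -/
import Mathlib

section
/- Let a_1,...,a_r be positive integers and let ν_r(n) denote the number of tuples (k_1,...,k_r) of nonnegative integers satisfying a_1 k_1 + ... + a_r k_r = n. Then for every n ≥ 1, n · ν_r(n) = Σ_{l=1}^{r} a_l Σ_{i=1}^{⌊n/a_l⌋} ν_r(n − i·a_l). -/
/-!
Each solution `k` of `a ⬝ᵥ k = n` contributes `n = ∑ₗ aₗ kₗ` to `n · ν(n)`, so it suffices to show
that `∑ₖ kₗ = ∑_{i ≥ 1} ν(n - i aₗ)`. Counting `kₗ` as the number of `i ≥ 1` with `i ≤ kₗ`, this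
follows from the bijection `k ↦ k - i eₗ` between the solutions with `kₗ ≥ i` and the solutions of
`a ⬝ᵥ k = n - i aₗ`.
-/

open Finset

lemma Finset.sum_eq_sum_Icc_card_filter_le {α : Type*} (s : Finset α) (f : α → ℕ) {N : ℕ}
    (hf : ∀ x ∈ s, f x ≤ N) : ∑ x ∈ s, f x = ∑ i ∈ Icc 1 N, #{x ∈ s | i ≤ f x} := by
  have hcount : ∀ x ∈ s, f x = #{i ∈ Icc 1 N | i ≤ f x} := fun x hx => by
    have hIcc : {i ∈ Icc 1 N | i ≤ f x} = Icc 1 (f x) := by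
      ext i
      simp only [mem_filter, mem_Icc]
      grind [hf x hx]
    rw [hIcc, Nat.card_Icc, Nat.add_sub_cancel]
  rw [sum_congr rfl hcount]
  simp only [card_filter]
  exact sum_comm

namespace LinearDiophantine

variable {ι : Type*} [Fintype ι] {a : ι → ℕ}

lemma mul_apply_le_of_dotProduct_eq {k : ι → ℕ} {m : ℕ} (hk : a ⬝ᵥ k = m) (l : ι) :
    a l * k l ≤ m :=
  hk ▸ single_le_sum (f := fun j => a j * k j) (fun _ _ => Nat.zero_le _) (mem_univ l)

variable [DecidableEq ι]

/-- Cutting the entries off at `m` loses no solution only when all `a l` are positive. -/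
def solutions (a : ι → ℕ) (m : ℕ) : Finset (ι → ℕ) :=
  {k ∈ Fintype.piFinset fun _ => range (m + 1) | a ⬝ᵥ k = m}

lemma mem_solutions (ha : ∀ l, 0 < a l) {k : ι → ℕ} {m : ℕ} :
    k ∈ solutions a m ↔ a ⬝ᵥ k = m := by
  refine ⟨fun hk => (mem_filter.1 hk).2, fun hk => mem_filter.2 ⟨?_, hk⟩⟩
  refine Fintype.mem_piFinset.2 fun l => mem_range_succ_iff.2 ?_
  exact (Nat.le_mul_of_pos_left _ (ha l)).trans (mul_apply_le_of_dotProduct_eq hk l)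

lemma natCard_eq_card_solutions (ha : ∀ l, 0 < a l) (m : ℕ) :
    Nat.card {k : ι → ℕ // a ⬝ᵥ k = m} = #(solutions a m) := by
  simp only [← mem_solutions ha, Nat.card_eq_finsetCard]

lemma mul_card_solutions (ha : ∀ l, 0 < a l) (n : ℕ) :
    n * #(solutions a n) = ∑ l, a l * ∑ k ∈ solutions a n, k l := by
  calc n * #(solutions a n) = ∑ k ∈ solutions a n, a ⬝ᵥ k := by
        rw [sum_congr rfl fun k hk => (mem_solutions ha).1 hk, sum_const, smul_eq_mul, mul_comm]
    _ = ∑ l, a l * ∑ k ∈ solutions a n, k l := by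
        simp only [dotProduct, mul_sum]
        exact sum_comm

lemma card_filter_le_apply_solutions (ha : ∀ l, 0 < a l) {n i : ℕ} {l : ι} (hi : i * a l ≤ n) :
    #{k ∈ solutions a n | i ≤ k l} = #(solutions a (n - i * a l)) := by
  have hweight : ∀ k : ι → ℕ, a ⬝ᵥ (k + Pi.single l i) = a ⬝ᵥ k + i * a l := fun k => by
    rw [dotProduct_add, dotProduct_single, mul_comm]
  have hsingle_le : ∀ {k : ι → ℕ}, i ≤ k l → Pi.single l i ≤ k := fun hk j => by
    rcases eq_or_ne j l with rfl | hj
    · simpa using hk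
    · simp [hj]
  refine card_nbij' (· - Pi.single l i) (· + Pi.single l i) ?_ ?_ ?_ ?_
  · intro k hk
    obtain ⟨hkn, hik⟩ := mem_filter.1 hk
    have := hweight (k - Pi.single l i)
    rw [tsub_add_cancel_of_le (hsingle_le hik), (mem_solutions ha).1 hkn] at this
    exact (mem_solutions ha).2 (show a ⬝ᵥ (k - Pi.single l i) = n - i * a l by omega)
  · intro k hk
    refine mem_filter.2 ⟨(mem_solutions ha).2 ?_, by simp⟩
    rw [hweight, (mem_solutions ha).1 hk, Nat.sub_add_cancel hi]
  · intro k hk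
    exact tsub_add_cancel_of_le (hsingle_le (mem_filter.1 hk).2)
  · intro k _
    exact add_tsub_cancel_right k _

lemma sum_apply_solutions (ha : ∀ l, 0 < a l) (n : ℕ) (l : ι) :
    ∑ k ∈ solutions a n, k l = ∑ i ∈ Icc 1 (n / a l), #(solutions a (n - i * a l)) := by
  have hbound : ∀ k ∈ solutions a n, k l ≤ n / a l := fun k hk =>
    (Nat.le_div_iff_mul_le (ha l)).2 <|
      mul_comm (a l) (k l) ▸ mul_apply_le_of_dotProduct_eq ((mem_solutions ha).1 hk) l
  rw [Finset.sum_eq_sum_Icc_card_filter_le _ _ hbound]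
  exact sum_congr rfl fun i hi =>
    card_filter_le_apply_solutions ha ((Nat.le_div_iff_mul_le (ha l)).1 (mem_Icc.1 hi).2)

end LinearDiophantine

open LinearDiophantine in
theorem linear_diophantine_recursion_general
    (r : ℕ) (a : Fin r → ℕ) (ha : ∀ l, 0 < a l)
    (ν : ℕ → ℕ)
    (hν : ∀ n, ν n = Nat.card {k : Fin r → ℕ // ∑ l, a l * k l = n})
    (n : ℕ) :
    n * ν n = ∑ l, a l * ∑ i ∈ Finset.Icc 1 (n / a l), ν (n - i * a l) := by
  have hν_card : ∀ m, ν m = #(solutions a m) := fun m =>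
    (hν m).trans (natCard_eq_card_solutions ha m)
  simp only [hν_card, mul_card_solutions ha, sum_apply_solutions ha]

theorem linear_diophantine_recursion
    (r : ℕ) (a : Fin r → ℕ) (ha : ∀ l, 0 < a l)
    (ν : ℕ → ℕ)
    (hν : ∀ n, ν n = Nat.card {k : Fin r → ℕ // ∑ l, a l * k l = n})
    (n : ℕ) (hn : 1 ≤ n) :
    n * ν n = ∑ l, a l * ∑ i ∈ Finset.Icc 1 (n / a l), ν (n - i * a l) :=
  linear_diophantine_recursion_general r a ha ν hν n
end

section
/- Let a_1,...,a_r be positive integers and ν_r(n) the number of nonnegative integer solutions of a_1 k_1 + ... + a_r k_r = n. Define ρ(m) = Σ_{l : a_l | m} a_l (the sum of those coefficients a_l dividing m, counted with multiplicity). Then for n ≥ 1, n · ν_r(n) = Σ_{m=1}^{n} ρ(m) ν_r(n − m). -/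
/-!
Summing the constraint over all solutions gives `n ν(n) = ∑ₗ aₗ ∑ₖ kₗ`. Counting `kₗ` as the
number of multiples `m` of `aₗ` in `[1, aₗ kₗ]` and exchanging the sums turns `∑ₖ kₗ` into
`∑_{aₗ ∣ m ≤ n} #{k | m ≤ aₗ kₗ}`, and lowering the `l`-th coordinate by `m / aₗ` matches the
solutions with `m ≤ aₗ kₗ` with the solutions for `n - m`.
-/

open Finset

lemma Nat.card_filter_dvd_and_le_mul {a c n : ℕ} (ha : 0 < a) (hcn : a * c ≤ n) :
    #{m ∈ Icc 1 n | a ∣ m ∧ m ≤ a * c} = c := by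
  have : {m ∈ Icc 1 n | a ∣ m ∧ m ≤ a * c} = {m ∈ Ioc 0 (a * c) | a ∣ m} := by
    ext m
    simp only [mem_filter, mem_Icc, mem_Ioc]
    omega
  rw [this, Nat.Ioc_filter_dvd_card_eq_div, Nat.mul_div_cancel_left c ha]

lemma Finset.sum_sum_ite_dvd_mul {ι : Type*} [Fintype ι] (a : ι → ℕ) (s : Finset ℕ) (g : ℕ → ℕ) :
    ∑ m ∈ s, (∑ l, if a l ∣ m then a l else 0) * g m = ∑ l, a l * ∑ m ∈ s with a l ∣ m, g m := by
  simp only [sum_mul, ite_mul, zero_mul, mul_sum, sum_filter, mul_ite, mul_zero]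
  rw [sum_comm]

lemma mul_apply_le_dotProduct {ι : Type*} [Fintype ι] (a k : ι → ℕ) (i : ι) :
    a i * k i ≤ a ⬝ᵥ k :=
  single_le_sum (f := fun j => a j * k j) (fun _ _ => Nat.zero_le _) (mem_univ i)

section Solutions

variable {ι : Type*} [Fintype ι] [DecidableEq ι]

def solutions (a : ι → ℕ) (n : ℕ) : Finset (ι → ℕ) :=
  {k ∈ Fintype.piFinset fun _ => range (n + 1) | a ⬝ᵥ k = n}

variable {a : ι → ℕ}

lemma mem_solutions (ha : ∀ i, 0 < a i) {n : ℕ} {k : ι → ℕ} :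
    k ∈ solutions a n ↔ a ⬝ᵥ k = n := by
  refine ⟨fun h => (mem_filter.mp h).2, fun h => mem_filter.mpr ⟨?_, h⟩⟩
  refine Fintype.mem_piFinset.mpr fun i => mem_range.mpr (Nat.lt_succ_of_le ?_)
  calc k i ≤ a i * k i := Nat.le_mul_of_pos_left _ (ha i)
    _ ≤ n := h ▸ mul_apply_le_dotProduct a k i

lemma natCard_dotProduct_eq (ha : ∀ i, 0 < a i) (n : ℕ) :
    Nat.card {k : ι → ℕ // a ⬝ᵥ k = n} = #(solutions a n) :=
  Nat.subtype_card _ fun _ => mem_solutions ha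

lemma mul_card_solutions (ha : ∀ i, 0 < a i) (n : ℕ) :
    n * #(solutions a n) = ∑ i, a i * ∑ k ∈ solutions a n, k i := by
  calc n * #(solutions a n) = ∑ k ∈ solutions a n, a ⬝ᵥ k := by
        rw [sum_const_nat fun k hk => (mem_solutions ha).mp hk, mul_comm]
    _ = ∑ i, a i * ∑ k ∈ solutions a n, k i := by
        simp only [dotProduct, mul_sum]
        exact sum_comm

lemma card_solutions_filter_le (ha : ∀ i, 0 < a i) {i : ι} {j n : ℕ} (hjn : a i * j ≤ n) :
    #{k ∈ solutions a n | j ≤ k i} = #(solutions a (n - a i * j)) := by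
  have hshift (k : ι → ℕ) : a ⬝ᵥ (k + Pi.single i j) = a ⬝ᵥ k + a i * j := by
    rw [dotProduct_add, dotProduct_single]
  have hcancel {k : ι → ℕ} (hk : j ≤ k i) : k - Pi.single i j + Pi.single i j = k :=
    tsub_add_cancel_of_le fun l => by
      rcases eq_or_ne l i with rfl | hl <;> simp [*]
  refine card_nbij' (· - Pi.single i j) (· + Pi.single i j) ?_ ?_ ?_ ?_
  · intro k hk
    simp only [mem_coe, mem_filter, mem_solutions ha] at hk ⊢
    have := hshift (k - Pi.single i j)
    rw [hcancel hk.2] at this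
    omega
  · intro k hk
    simp only [mem_coe, mem_filter, mem_solutions ha] at hk ⊢
    exact ⟨by rw [hshift, hk, Nat.sub_add_cancel hjn], by simp⟩
  · intro k hk
    exact hcancel (mem_filter.mp hk).2
  · intro k _
    exact add_tsub_cancel_right k _

lemma sum_apply_solutions (ha : ∀ i, 0 < a i) (i : ι) (n : ℕ) :
    ∑ k ∈ solutions a n, k i = ∑ m ∈ Icc 1 n with a i ∣ m, #(solutions a (n - m)) := by
  calc ∑ k ∈ solutions a n, k i
      = ∑ k ∈ solutions a n, #{m ∈ {m ∈ Icc 1 n | a i ∣ m} | m ≤ a i * k i} := by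
        refine sum_congr rfl fun k hk => ?_
        rw [filter_filter, Nat.card_filter_dvd_and_le_mul (ha i)]
        exact (mem_solutions ha).mp hk ▸ mul_apply_le_dotProduct a k i
    _ = ∑ m ∈ Icc 1 n with a i ∣ m, #{k ∈ solutions a n | m ≤ a i * k i} :=
        sum_card_bipartiteAbove_eq_sum_card_bipartiteBelow _
    _ = ∑ m ∈ Icc 1 n with a i ∣ m, #(solutions a (n - m)) := by
        refine sum_congr rfl fun m hm => ?_
        obtain ⟨⟨-, hmn⟩, j, rfl⟩ := by simpa only [mem_filter, mem_Icc] using hm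
        simp only [Nat.mul_le_mul_left_iff (ha i)]
        exact card_solutions_filter_le ha hmn

end Solutions

theorem linear_diophantine_recursion_divisor_form_general
    (r : ℕ) (a : Fin r → ℕ) (ha : ∀ l, 0 < a l)
    (ν : ℕ → ℕ)
    (hν : ∀ n, ν n = Nat.card {k : Fin r → ℕ // ∑ l, a l * k l = n})
    (ρ : ℕ → ℕ)
    (hρ : ∀ m, ρ m = ∑ l, if a l ∣ m then a l else 0)
    (n : ℕ) :
    n * ν n = ∑ m ∈ Finset.Icc 1 n, ρ m * ν (n - m) := by
  have hν' (m : ℕ) : ν m = #(solutions a m) := (hν m).trans (natCard_dotProduct_eq ha m)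
  simp only [hρ, hν', sum_sum_ite_dvd_mul, mul_card_solutions ha, sum_apply_solutions ha]

theorem linear_diophantine_recursion_divisor_form
    (r : ℕ) (a : Fin r → ℕ) (ha : ∀ l, 0 < a l)
    (ν : ℕ → ℕ)
    (hν : ∀ n, ν n = Nat.card {k : Fin r → ℕ // ∑ l, a l * k l = n})
    (ρ : ℕ → ℕ)
    (hρ : ∀ m, ρ m = ∑ l, if a l ∣ m then a l else 0)
    (n : ℕ) (hn : 1 ≤ n) :
    n * ν n = ∑ m ∈ Finset.Icc 1 n, ρ m * ν (n - m) :=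
  linear_diophantine_recursion_divisor_form_general r a ha ν hν ρ hρ n
end

section
/- Let g_1,...,g_r : ℕ → ℕ be strictly increasing with g_l(0) = 0 and ν_r(n) the number of nonnegative solutions of Σ_l g_l(k_l) = n. With c_{lk} ∈ {0,1} the indicator that k lies in the image g_l(ℕ_{≥1}), and K_m(c_{l1},...,c_{lm}) = Σ_{k=1}^{m} (−1)^{k−1} (k−1)! B_{m,k}(1! c_{l1}, ..., (m−k+1)! c_{l,m−k+1}) (where B_{m,k} are partial Bell polynomials), one has n · ν_r(n) = Σ_{l=1}^{r} Σ_{m=1}^{n} K_m(c_{l1},...,c_{lm}) ν_r(n − m)/(m−1)!. -/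
open PowerSeries Classical

/-- The partial Bell polynomial `B_{n,k}`, evaluated at the sequence `x` (indexed from 1),
defined by the standard recurrence `B_{n+1,k+1} = ∑_{i=0}^{n} C(n,i) x_{i+1} B_{n-i,k}`,
equivalent to `(1/k!) (∑_{j≥1} x_j t^j / j!)^k = ∑_{n≥k} B_{n,k} x t^n / n!`. -/
def partialBell {R : Type*} [CommRing R] : ℕ → ℕ → (ℕ → R) → R
  | 0, 0, _ => 1
  | _ + 1, 0, _ => 0
  | 0, _ + 1, _ => 0
  | n + 1, k + 1, x => ∑ i ∈ Finset.range (n + 1),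
      (n.choose i : R) * x (i + 1) * partialBell (n - i) k x

/-!
Write `φ_l = ∑_m X ^ (g_l m) = 1 + f_l`; then `F = ∏ φ_l` has coefficients `ν`, and
`X F' = ∑_l (X φ_l' / φ_l) F`. Modulo `X ^ (n + 1)` the inverse of `1 + f_l` is the finite geometric
sum `∑_k (-f_l) ^ k`. The Bell recurrence is the convolution identity
`k! B_{n+1,k+1}(j! a_j) = n! [X^n] f' f ^ k` for `f = ∑ a_j X ^ j` without constant term, so the
`m`-th coefficient of `X φ_l' / φ_l` is `K_m / (m - 1)!`.
-/

open Finset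
open scoped Nat

theorem Derivation.leibniz_prod {R A M : Type*} [CommSemiring R] [CommSemiring A]
    [AddCommMonoid M] [Algebra R A] [Module A M] [Module R M] (D : Derivation R A M)
    {ι : Type*} [DecidableEq ι] (s : Finset ι) (f : ι → A) :
    D (∏ i ∈ s, f i) = ∑ i ∈ s, (∏ j ∈ s.erase i, f j) • D (f i) := by
  induction s using Finset.induction_on with
  | empty => simp
  | insert a s ha ih =>
    rw [prod_insert ha, D.leibniz, ih, sum_insert ha, erase_insert ha, smul_sum, add_comm]
    congr 1
    refine sum_congr rfl fun i hi => ?_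
    rw [erase_insert_of_ne (ne_of_mem_of_not_mem hi ha).symm,
      prod_insert fun h => ha (mem_of_mem_erase h), smul_smul]

theorem StrictMono.exists_one_le_eq_iff {g : ℕ → ℕ} (hg : StrictMono g) (h0 : g 0 = 0) {k : ℕ} :
    (∃ m, 1 ≤ m ∧ g m = k) ↔ k ≠ 0 ∧ k ∈ Set.range g := by
  constructor
  · rintro ⟨m, hm, rfl⟩
    exact ⟨(h0 ▸ hg hm).ne', m, rfl⟩
  · rintro ⟨hk, m, rfl⟩
    exact ⟨m, Nat.one_le_iff_ne_zero.mpr (by rintro rfl; exact hk h0), rfl⟩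

namespace PowerSeries

theorem natCard_sum_eq_coeff_prod {S ι : Type*} [CommSemiring S] [Fintype ι] (g : ι → ℕ → ℕ)
    (hg : ∀ i, Function.Injective (g i)) (n : ℕ) :
    (Nat.card {k : ι → ℕ // ∑ i, g i (k i) = n} : S) =
      coeff n (∏ i, mk fun m => if m ∈ Set.range (g i) then (1 : S) else 0) := by
  rw [coeff_prod]
  simp only [coeff_mk, prod_boole, sum_boole, mem_univ, true_implies]
  congr 1
  rw [← Nat.card_eq_finsetCard]
  refine Nat.card_congr (Equiv.ofBijective
    (fun k => ⟨Finsupp.equivFunOnFinite.symm fun i => g i (k.1 i), ?_⟩) ⟨?_, ?_⟩)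
  · simpa [mem_finsuppAntidiag] using k.2
  · intro k k' h
    simp only [Subtype.mk.injEq, EmbeddingLike.apply_eq_iff_eq, funext_iff] at h
    exact Subtype.ext (funext fun i => hg i (h i))
  · rintro ⟨d, hd⟩
    simp only [mem_filter, mem_finsuppAntidiag, Set.mem_range] at hd
    choose k hk using hd.2
    refine ⟨⟨k, ?_⟩, Subtype.ext (Finsupp.ext fun i => by simp [hk])⟩
    simpa [hk] using hd.1.1

theorem mk_indicator_range_eq_one_add {S : Type*} [Semiring S] {g : ℕ → ℕ} (hg : StrictMono g)
    (h0 : g 0 = 0) :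
    (mk fun k => if k ∈ Set.range g then (1 : S) else 0) =
      1 + mk fun k => if ∃ m, 1 ≤ m ∧ g m = k then 1 else 0 := by
  ext k
  simp only [coeff_mk, map_add, coeff_one, hg.exists_one_le_eq_iff h0]
  rcases eq_or_ne k 0 with rfl | hk
  · simp [show (0 : ℕ) ∈ Set.range g from ⟨0, h0⟩]
  · simp [hk]

section CommSemiring

variable {R : Type*} [CommSemiring R] {f : R⟦X⟧}

theorem coeff_mul_pow_eq_zero_of_lt (hf : constantCoeff f = 0) (g : R⟦X⟧) {m k : ℕ}
    (h : m < k) : coeff m (g * f ^ k) = 0 :=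
  X_pow_dvd_iff.mp ((pow_dvd_pow_of_dvd (X_dvd_iff.mpr hf) k).mul_left g) m h

theorem coeff_X_mul_derivative (f : R⟦X⟧) (n : ℕ) :
    coeff n (X * d⁄dX R f) = n * coeff n f := by
  rcases n with _ | n
  · simp
  · rw [coeff_succ_X_mul, coeff_derivative, mul_comm]
    push_cast; ring

theorem coeff_X_mul_mul (L F : R⟦X⟧) (n : ℕ) :
    coeff n (X * L * F) = ∑ m ∈ Icc 1 n, coeff (m - 1) L * coeff (n - m) F := by
  rcases n with _ | n
  · simp
  · rw [mul_assoc, coeff_succ_X_mul, coeff_mul, Nat.sum_antidiagonal_eq_sum_range_succ_mk,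
      ← Ico_add_one_right_eq_Icc, sum_Ico_eq_sum_range]
    refine sum_congr (by simp) fun i _ => ?_
    rw [Nat.add_sub_cancel_left, add_comm 1 i, Nat.add_sub_add_right]

end CommSemiring

variable {R : Type*} [CommRing R] {f : R⟦X⟧}

theorem factorial_mul_partialBell_succ_succ_of_forall {k : ℕ}
    (hk : ∀ m, (k ! : R) * partialBell m k (fun j => j ! * coeff j f) = m ! * coeff m (f ^ k))
    (n : ℕ) :
    (k ! : R) * partialBell (n + 1) (k + 1) (fun j => j ! * coeff j f) =
      n ! * coeff n (d⁄dX R f * f ^ k) := by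
  rw [partialBell, mul_sum, coeff_mul, Nat.sum_antidiagonal_eq_sum_range_succ_mk, mul_sum]
  refine sum_congr rfl fun i hi => ?_
  have hchoose : (n.choose i : R) * i ! * (n - i)! = n ! := mod_cast congrArg (Nat.cast : ℕ → R)
    (Nat.choose_mul_factorial_mul_factorial (Nat.lt_succ_iff.mp (mem_range.mp hi)))
  rw [coeff_derivative, mul_left_comm, hk, Nat.factorial_succ]
  push_cast
  linear_combination ((i + 1) * coeff (i + 1) f * coeff (n - i) (f ^ k)) * hchoose

theorem factorial_mul_partialBell (hf : constantCoeff f = 0) (m k : ℕ) :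
    (k ! : R) * partialBell m k (fun j => j ! * coeff j f) = m ! * coeff m (f ^ k) := by
  induction k generalizing m with
  | zero => rcases m with _ | m <;> simp [partialBell, coeff_one]
  | succ k ih =>
    rcases m with _ | n
    · rw [partialBell, mul_zero, ← one_mul (f ^ _), coeff_mul_pow_eq_zero_of_lt hf 1 k.succ_pos,
        mul_zero]
    have hderiv : coeff n (d⁄dX R (f ^ (k + 1))) = (k + 1) * coeff n (d⁄dX R f * f ^ k) := by
      rw [Derivation.leibniz_pow, Nat.add_sub_cancel, map_nsmul, smul_eq_mul, nsmul_eq_mul,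
        mul_comm (f ^ k)]
      push_cast; rfl
    rw [coeff_derivative] at hderiv
    calc ((k + 1)! : R) * partialBell (n + 1) (k + 1) (fun j => j ! * coeff j f)
        = (k + 1) * (n ! * coeff n (d⁄dX R f * f ^ k)) := by
          rw [← factorial_mul_partialBell_succ_succ_of_forall ih, Nat.factorial_succ]
          push_cast; ring
      _ = (n + 1)! * coeff (n + 1) (f ^ (k + 1)) := by
          rw [Nat.factorial_succ]
          push_cast
          linear_combination (n ! : R) * hderiv.symm

theorem factorial_mul_partialBell_succ_succ (hf : constantCoeff f = 0) (n k : ℕ) :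
    (k ! : R) * partialBell (n + 1) (k + 1) (fun j => j ! * coeff j f) =
      n ! * coeff n (d⁄dX R f * f ^ k) :=
  factorial_mul_partialBell_succ_succ_of_forall (factorial_mul_partialBell hf · k) n

/-- `f' (1 - f + f² - ⋯ ± f ^ (N - 1))`, which agrees with the logarithmic derivative
`(1 + f)' / (1 + f)` modulo `X ^ N` when `f` has no constant term. -/
noncomputable def truncLogDeriv (N : ℕ) (f : R⟦X⟧) : R⟦X⟧ :=
  d⁄dX R f * ∑ k ∈ range N, (-f) ^ k

theorem one_add_mul_truncLogDeriv (N : ℕ) (f : R⟦X⟧) :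
    (1 + f) * truncLogDeriv N f = d⁄dX R f * (1 - (-f) ^ N) := by
  rw [truncLogDeriv, mul_left_comm, ← mul_neg_geom_sum, sub_neg_eq_add]

theorem coeff_X_mul_derivative_mul (hf : constantCoeff f = 0) (G : R⟦X⟧) (n : ℕ) :
    coeff n (X * d⁄dX R f * G) = coeff n (X * truncLogDeriv n f * ((1 + f) * G)) := by
  have hdvd : X ^ (n + 1) ∣ X * d⁄dX R f * (-f) ^ n * G := by
    rw [pow_succ']
    exact (mul_dvd_mul (dvd_mul_right X _)
      (pow_dvd_pow_of_dvd (X_dvd_iff.mpr (by simp [hf])) n)).mul_right G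
  have hsplit : X * truncLogDeriv n f * ((1 + f) * G) =
      X * d⁄dX R f * G - X * d⁄dX R f * (-f) ^ n * G := by
    linear_combination (X * G) * one_add_mul_truncLogDeriv n f
  rw [hsplit, map_sub, X_pow_dvd_iff.mp hdvd n n.lt_succ_self, sub_zero]

theorem factorial_mul_coeff_truncLogDeriv (hf : constantCoeff f = 0) {m N : ℕ} (h : m < N) :
    (m ! : R) * coeff m (truncLogDeriv N f) = ∑ k ∈ Icc 1 (m + 1),
      (-1) ^ (k - 1) * (k - 1)! * partialBell (m + 1) k (fun j => j ! * coeff j f) := by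
  have hneg : ∀ i, (-f) ^ i = C ((-1) ^ i) * f ^ i := fun i => by
    rw [neg_pow, map_pow, map_neg, map_one]
  have hvanish : ∀ i ∈ range N, i ∉ range (m + 1) → coeff m (d⁄dX R f * (-f) ^ i) = 0 :=
    fun i _ hi => by
      rw [hneg, ← mul_assoc, coeff_mul_pow_eq_zero_of_lt hf _ (by simpa using hi)]
  rw [← Ico_add_one_right_eq_Icc, sum_Ico_eq_sum_range, truncLogDeriv, mul_sum, map_sum,
    ← sum_subset (range_subset_range.mpr h) hvanish, mul_sum]
  refine sum_congr rfl fun i _ => ?_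
  rw [add_comm 1 i, Nat.add_sub_cancel, mul_assoc, factorial_mul_partialBell_succ_succ hf,
    hneg, mul_left_comm, coeff_C_mul, mul_left_comm]

end PowerSeries

theorem general_additive_diophantine_recursion_bell_general
    (r : ℕ) (g : Fin r → ℕ → ℕ)
    (hmono : ∀ l, StrictMono (g l))
    (h0 : ∀ l, g l 0 = 0)
    (ν : ℕ → ℕ)
    (hν : ∀ n, ν n = Nat.card {k : Fin r → ℕ // ∑ l, g l (k l) = n})
    (c : Fin r → ℕ → ℚ)
    (hc : ∀ l k, c l k = if ∃ m, 1 ≤ m ∧ g l m = k then (1 : ℚ) else 0)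
    (K : Fin r → ℕ → ℚ)
    (hK : ∀ l m, K l m = ∑ k ∈ Finset.Icc 1 m,
      (-1 : ℚ) ^ (k - 1) * (k - 1).factorial *
        partialBell m k (fun j => (j.factorial : ℚ) * c l j))
    (n : ℕ) :
    (n : ℚ) * ν n
      = ∑ l, ∑ m ∈ Finset.Icc 1 n,
          ((m - 1).factorial : ℚ)⁻¹ * K l m * ν (n - m) := by
  have hcf : ∀ l, c l = fun k => if ∃ m, 1 ≤ m ∧ g l m = k then 1 else 0 := fun l =>
    funext (hc l)
  set f : Fin r → ℚ⟦X⟧ := fun l => mk (c l)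
  have hf : ∀ l, constantCoeff (f l) = 0 := fun l => by
    simp [f, ← coeff_zero_eq_constantCoeff_apply, hc, (hmono l).exists_one_le_eq_iff (h0 l)]
  set F := ∏ l, (1 + f l)
  have hνF : ∀ m, (ν m : ℚ) = coeff m F := fun m => by
    simp only [hν, natCard_sum_eq_coeff_prod g (fun l => (hmono l).injective),
      mk_indicator_range_eq_one_add (hmono _) (h0 _), F, f, hcf]
  have hKf : ∀ l, ∀ m ∈ Finset.Icc 1 n,
      ((m - 1).factorial : ℚ)⁻¹ * K l m = coeff (m - 1) (truncLogDeriv n (f l)) := by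
    intro l m hm
    obtain ⟨p, rfl⟩ : ∃ p, m = p + 1 := ⟨m - 1, by simp at hm; omega⟩
    have hx : (fun j => (j ! : ℚ) * c l j) = fun j => j ! * coeff j (f l) := by simp [f]
    rw [Nat.add_sub_cancel, hK, hx,
      ← factorial_mul_coeff_truncLogDeriv (hf l) (by simp at hm; omega),
      inv_mul_cancel_left₀ (by positivity)]
  calc (n : ℚ) * ν n = coeff n (X * d⁄dX ℚ F) := by rw [coeff_X_mul_derivative, hνF]
    _ = ∑ l, coeff n (X * d⁄dX ℚ (f l) * ∏ j ∈ univ.erase l, (1 + f j)) := by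
      simp only [F, Derivation.leibniz_prod, map_add, Derivation.map_one_eq_zero, zero_add,
        smul_eq_mul, mul_sum, map_sum, mul_comm, mul_left_comm]
    _ = ∑ l, coeff n (X * truncLogDeriv n (f l) * F) := by
      refine sum_congr rfl fun l _ => ?_
      rw [coeff_X_mul_derivative_mul (hf l), mul_prod_erase univ (fun j => 1 + f j) (mem_univ l)]
    _ = _ := by
      refine sum_congr rfl fun l _ => ?_
      rw [coeff_X_mul_mul]
      exact sum_congr rfl fun m hm => by rw [hKf l m hm, hνF]

theorem general_additive_diophantine_recursion_bell
    (r : ℕ) (g : Fin r → ℕ → ℕ)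
    (hmono : ∀ l, StrictMono (g l))
    (h0 : ∀ l, g l 0 = 0)
    (ν : ℕ → ℕ)
    (hν : ∀ n, ν n = Nat.card {k : Fin r → ℕ // ∑ l, g l (k l) = n})
    (c : Fin r → ℕ → ℚ)
    (hc : ∀ l k, c l k = if ∃ m, 1 ≤ m ∧ g l m = k then (1 : ℚ) else 0)
    (K : Fin r → ℕ → ℚ)
    (hK : ∀ l m, K l m = ∑ k ∈ Finset.Icc 1 m,
      (-1 : ℚ) ^ (k - 1) * (k - 1).factorial *
        partialBell m k (fun j => (j.factorial : ℚ) * c l j))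
    (n : ℕ) (hn : 1 ≤ n) :
    (n : ℚ) * ν n
      = ∑ l, ∑ m ∈ Finset.Icc 1 n,
          ((m - 1).factorial : ℚ)⁻¹ * K l m * ν (n - m) :=
  general_additive_diophantine_recursion_bell_general r g hmono h0 ν hν c hc K hK n
end
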